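/- arXiv:1601.00550 — 4 statements merged into one kernel-verified Lean document; each statement's English description precedes it below -/
import Mathlib

section
/- Let A = KQ/I be a special multiserial algebra and M a (σ,τ)-maximal path. Then M has no repeated arrows. -/
/-!  A model of the path algebra `KQ` of a finite quiver `Q` (vertex set `V`,
arrow set `A`, source and target maps `s t : A → V`), as the quotient of the
free algebra on `V ⊕ A` by the usual path-algebra relations.  -/

open FreeAlgebra

inductive PathRel (K V A : Type) [Field K] [Fintype V] [DecidableEq V] (s t : A → V) :
    FreeAlgebra K (V ⊕ A) → FreeAlgebra K (V ⊕ A) → Prop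
  | vtxMul : ∀ v w : V,
      PathRel K V A s t (ι K (Sum.inl v) * ι K (Sum.inl w))
        (if v = w then ι K (Sum.inl v) else 0)
  | unit : PathRel K V A s t (∑ v : V, ι K (Sum.inl v)) 1
  | src : ∀ a : A,
      PathRel K V A s t (ι K (Sum.inl (s a)) * ι K (Sum.inr a)) (ι K (Sum.inr a))
  | tgt : ∀ a : A,
      PathRel K V A s t (ι K (Sum.inr a) * ι K (Sum.inl (t a))) (ι K (Sum.inr a))

/-- The path algebra `KQ`. -/
abbrev PathAlg (K V A : Type) [Field K] [Fintype V] [DecidableEq V] (s t : A → V) : Type :=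
  RingQuot (PathRel K V A s t)

section

variable (K V A : Type) [Field K] [Fintype V] [DecidableEq V] (s t : A → V)

/-- The element of `KQ` corresponding to an arrow. -/
noncomputable def arrow (a : A) : PathAlg K V A s t :=
  RingQuot.mkAlgHom K (PathRel K V A s t) (ι K (Sum.inr a))

/-- The idempotent of `KQ` corresponding to a vertex (trivial path). -/
noncomputable def vtx (v : V) : PathAlg K V A s t :=
  RingQuot.mkAlgHom K (PathRel K V A s t) (ι K (Sum.inl v))

/-- The element of `KQ` given by a path, recorded as its list of arrows. -/
noncomputable def pathElem (l : List A) : PathAlg K V A s t :=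
  (l.map (arrow K V A s t)).prod

/-- The ideal `J²`, where `J` is the arrow ideal: it is generated by the
products of two arrows (equivalently, by the paths of length 2). -/
def JSqIdeal : TwoSidedIdeal (PathAlg K V A s t) :=
  TwoSidedIdeal.span {x | ∃ a b : A, x = arrow K V A s t a * arrow K V A s t b}

/-- An ideal `I` of `KQ` is admissible if `J^N ⊆ I ⊆ J²` for some `N ≥ 2`;
`J^N ⊆ I` amounts to all paths of length `N` lying in `I`. -/
def Admissible (I : TwoSidedIdeal (PathAlg K V A s t)) : Prop :=
  ∃ N : ℕ, 2 ≤ N ∧ (∀ l : List A, l.length = N → pathElem K V A s t l ∈ I) ∧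
    I ≤ JSqIdeal K V A s t

/-- Condition (M): for every arrow `a` there is at most one arrow `b` with
`ab ∉ I` and at most one arrow `c` with `ca ∉ I`. -/
def ConditionM (I : TwoSidedIdeal (PathAlg K V A s t)) : Prop :=
  ∀ a : A,
    (∀ b b' : A, arrow K V A s t a * arrow K V A s t b ∉ I →
      arrow K V A s t a * arrow K V A s t b' ∉ I → b = b') ∧
    (∀ c c' : A, arrow K V A s t c * arrow K V A s t a ∉ I →
      arrow K V A s t c' * arrow K V A s t a ∉ I → c = c')

/-- `σ : Q₁ → Q₁ ∪ {⋄}` (with `⋄ = none`): `σ a = some b` iff `ab ∉ I`. -/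
def SigmaSpec (I : TwoSidedIdeal (PathAlg K V A s t)) (σ : A → Option A) : Prop :=
  ∀ a b : A, σ a = some b ↔ arrow K V A s t a * arrow K V A s t b ∉ I

/-- `τ : Q₁ → Q₁ ∪ {⋄}` (with `⋄ = none`): `τ a = some c` iff `ca ∉ I`. -/
def TauSpec (I : TwoSidedIdeal (PathAlg K V A s t)) (τ : A → Option A) : Prop :=
  ∀ a c : A, τ a = some c ↔ arrow K V A s t c * arrow K V A s t a ∉ I

end

/-- Iterate of `σ` (extended to `Q₁ ∪ {⋄}` by `σ(⋄) = ⋄`) applied to an arrow: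
`OIter σ n a = σⁿ(a)`. -/
def OIter {A : Type} (σ : A → Option A) (n : ℕ) (a : A) : Option A :=
  (fun o => o.bind σ)^[n] (some a)

/-- A `(σ,τ)`-maximal path `a₁ ⋯ a_r`: `σ(aᵢ) = a_{i+1}`, `σ(a_r) = ⋄`,
`τ(a₁) = ⋄`. -/
def IsMaximalPath {A : Type} (σ τ : A → Option A) (l : List A) : Prop :=
  l ≠ [] ∧ l.Chain' (fun x y => σ x = some y) ∧
    (∀ x ∈ l.getLast?, σ x = none) ∧ (∀ x ∈ l.head?, τ x = none)

/-- The cycle `C_a = a σ(a) ⋯ σ^{m̂_a−1}(a)`, where `m̂_a` is the least positive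
integer with `σ^{m̂_a}(a) = a`:  `l` has entries the iterates of `σ` at `a` and
length the least positive return time of `a` under `σ`. -/
def IsSigmaCycleOf {A : Type} (σ : A → Option A) (a : A) (l : List A) : Prop :=
  l ≠ [] ∧ (∀ i : ℕ, i < l.length → l[i]? = OIter σ i a) ∧
    OIter σ l.length a = some a ∧
    ∀ k : ℕ, 0 < k → k < l.length → OIter σ k a ≠ some a

/-- A list of arrows is composable (i.e. a genuine path) if the target of each
arrow is the source of the next. -/
def Composable {V A : Type} (s t : A → V) (l : List A) : Prop :=
  l.Chain' (fun a b => t a = s b)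

/-- A simple cycle: a nonempty path with the same start and end vertex and no
repeated arrows. -/
def IsSimpleCycle {V A : Type} (s t : A → V) (l : List A) : Prop :=
  l ≠ [] ∧ Composable s t l ∧ (∀ x ∈ l.head?, ∀ y ∈ l.getLast?, t y = s x) ∧ l.Nodup

/-- The path `C^m` for a cycle `C`. -/
def cyclePow {A : Type} (l : List A) (m : ℕ) : List A := (List.replicate m l).flatten

/-- A defining pair `(𝒮, μ)` in the quiver `Q`: a set `𝒮` of simple cycles and
`μ : 𝒮 → ℤ_{>0}` satisfying (D0)–(D4). -/
def IsDefiningPair {V A : Type} (s t : A → V) (S : Set (List A)) (μ : List A → ℕ) : Prop :=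
  (∀ l ∈ S, IsSimpleCycle s t l) ∧
  (∀ l ∈ S, 0 < μ l) ∧
  (∀ l ∈ S, l.length = 1 → 1 < μ l) ∧
  (∀ l ∈ S, ∀ l' : List A, l.IsRotated l' → l' ∈ S) ∧
  (∀ l ∈ S, ∀ l' ∈ S, l.IsRotated l' → μ l = μ l') ∧
  (∀ a : A, ∃ l ∈ S, a ∈ l) ∧
  (∀ l ∈ S, ∀ l' ∈ S, (∃ a : A, a ∈ l ∧ a ∈ l') → l.IsRotated l')

/-- The set of relations of Types 1, 2 and 3 attached to a defining pair:
Type 1: `C^{μ(C)} − C'^{μ(C')}` for `C, C' ∈ 𝒮` cycles at the same vertex;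
Type 2: `C^{μ(C)} a` for `C ∈ 𝒮` with first arrow `a`;
Type 3: `ab` for arrows `a, b` with `ab` not a subpath of any `C^s`, `C ∈ 𝒮`. -/
def RelSet (K V A : Type) [Field K] [Fintype V] [DecidableEq V] (s t : A → V)
    (S : Set (List A)) (μ : List A → ℕ) : Set (PathAlg K V A s t) :=
  {x | ∃ l ∈ S, ∃ l' ∈ S, ∃ a ∈ l.head?, ∃ a' ∈ l'.head?, s a = s a' ∧
      x = pathElem K V A s t (cyclePow l (μ l)) - pathElem K V A s t (cyclePow l' (μ l'))} ∪
  {x | ∃ l ∈ S, ∃ a ∈ l.head?, x = pathElem K V A s t (cyclePow l (μ l) ++ [a])} ∪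
  {x | ∃ a b : A, x = arrow K V A s t a * arrow K V A s t b ∧
      ∀ l ∈ S, ∀ m : ℕ, ¬ [a, b] <:+: cyclePow l m}

/-- The ideal of relations of a defining pair. -/
def DefIdeal (K V A : Type) [Field K] [Fintype V] [DecidableEq V] (s t : A → V)
    (S : Set (List A)) (μ : List A → ℕ) : TwoSidedIdeal (PathAlg K V A s t) :=
  TwoSidedIdeal.span (RelSet K V A s t S μ)

/-- The relation whose `RingQuot` is the algebra `KQ/I` defined by a defining
pair, `I` generated by the Type 1, 2, 3 relations. -/
def QRel (K V A : Type) [Field K] [Fintype V] [DecidableEq V] (s t : A → V)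
    (S : Set (List A)) (μ : List A → ℕ) :
    PathAlg K V A s t → PathAlg K V A s t → Prop :=
  fun x y => x ∈ RelSet K V A s t S μ ∧ y = 0

/-! By condition (M), `σ` is injective where it is defined, and `τ(a₁) = ⋄` says that `a₁` is not
a value of `σ`. In the `σ`-orbit `a₁, σ(a₁), …` a repetition `aᵢ₊₁ = aⱼ₊₁` therefore pulls back
to the earlier repetition `aᵢ = aⱼ`, and ultimately to one of the form `a₁ = aⱼ₊₁ = σ(aⱼ)`. -/

theorem List.nodup_of_isChain_of_injective {α : Type*} {f : α → Option α} {l : List α}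
    (hinj : ∀ a a' b, f a = some b → f a' = some b → a = a')
    (hhead : ∀ x ∈ l.head?, ∀ c, f c ≠ some x)
    (hchain : l.IsChain fun x y => f x = some y) : l.Nodup := by
  have pullback : ∀ i j (hi : i + 1 < l.length) (hj : j + 1 < l.length),
      l[i + 1] = l[j + 1] → l[i] = l[j] := fun i j hi hj h =>
    hinj _ _ _ (hchain.getElem i hi) (h ▸ hchain.getElem j hj)
  have head_ne : ∀ j (hj : j + 1 < l.length), l[0] ≠ l[j + 1] := fun j hj h =>
    hhead l[0] (by simp [List.head?_eq_getElem?]) l[j] (h ▸ hchain.getElem j hj)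
  rw [List.nodup_iff_injective_getElem]
  rintro ⟨i, hi⟩ ⟨j, hj⟩ h
  simp only [Fin.mk.injEq] at h ⊢
  induction i generalizing j with
  | zero => cases j with
    | zero => rfl
    | succ j => exact absurd h (head_ne j hj)
  | succ i ih => cases j with
    | zero => exact absurd h.symm (head_ne i hi)
    | succ j => exact congrArg (· + 1) (ih (by omega) j (by omega) (pullback i j hi hj h))

section

variable {K V A : Type} [Field K] [Fintype V] [DecidableEq V] {s t : A → V}
  {I : TwoSidedIdeal (PathAlg K V A s t)} {σ τ : A → Option A}

theorem SigmaSpec.eq_of_eq_some (hM : ConditionM K V A s t I) (hσ : SigmaSpec K V A s t I σ)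
    {a a' b : A} (ha : σ a = some b) (ha' : σ a' = some b) : a = a' :=
  (hM b).2 a a' ((hσ a b).mp ha) ((hσ a' b).mp ha')

theorem SigmaSpec.ne_some_of_tau_eq_none (hσ : SigmaSpec K V A s t I σ)
    (hτ : TauSpec K V A s t I τ) {b : A} (hb : τ b = none) (c : A) : σ c ≠ some b := fun hc => by
  simpa [hb] using (hτ b c).mpr ((hσ c b).mp hc)

end

theorem maximal_path_nodup_general
    (K V A : Type) [Field K] [Fintype V] [DecidableEq V]
    (s t : A → V) (I : TwoSidedIdeal (PathAlg K V A s t))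
    (hM : ConditionM K V A s t I)
    (σ τ : A → Option A) (hσ : SigmaSpec K V A s t I σ) (hτ : TauSpec K V A s t I τ) :
    ∀ l : List A, IsMaximalPath σ τ l → l.Nodup := by
  rintro l ⟨-, hchain, -, hhead⟩
  exact List.nodup_of_isChain_of_injective (fun _ _ _ => hσ.eq_of_eq_some hM)
    (fun x hx => hσ.ne_some_of_tau_eq_none hτ (hhead x hx)) hchain

/-- A `(σ,τ)`-maximal path has no repeated arrows. -/
theorem maximal_path_nodup
    (K V A : Type) [Field K] [Fintype V] [DecidableEq V] [Fintype A]
    (s t : A → V) (I : TwoSidedIdeal (PathAlg K V A s t))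
    (hAdm : Admissible K V A s t I) (hM : ConditionM K V A s t I)
    (σ τ : A → Option A) (hσ : SigmaSpec K V A s t I σ) (hτ : TauSpec K V A s t I τ) :
    ∀ l : List A, IsMaximalPath σ τ l → l.Nodup :=
  maximal_path_nodup_general K V A s t I hM σ τ hσ hτ
end

section
/- Let A = KQ/I be a special multiserial algebra and a an arrow. Then a occurs either in the (σ,τ)-maximal path M_a = τ^{n_a−1}(a)⋯τ(a) a σ(a)⋯σ^{m_a−1}(a) (when m_a and n_a exist) or in the simple cycle C_a = a σ(a)⋯σ^{m̂_a−1}(a) (when m̂_a exists), but not both. -/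
/-!  A model of the path algebra `KQ` of a finite quiver `Q` (vertex set `V`,
arrow set `A`, source and target maps `s t : A → V`), as the quotient of the
free algebra on `V ⊕ A` by the usual path-algebra relations.  -/

open FreeAlgebra

/-!
Since `σ x = y` exactly when `τ y = x`, the maps `σ` and `τ` are mutually inverse partial
injections of the finite set of arrows. If the `σ`-orbit of `a` never reaches `⋄`, it repeats,
and pulling a repetition `σⁱ a = σʲ a` back along `τ` gives `σ^{j-i} a = a`: this is the cycle
`C_a`, and `a` lies on no maximal path because `σ` runs off the end of such a path. If instead
the `σ`-orbit of `a` reaches `⋄`, it is not periodic, so `C_a` does not exist; then the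
`τ`-orbit of `a` also reaches `⋄` (otherwise it, and hence the `σ`-orbit, would be periodic),
and the `σ`-orbit of its last arrow `τ^{n_a-1}(a)` is the maximal path `M_a` through `a`.
-/

namespace OIter

variable {A : Type} {σ τ : A → Option A} {a b : A} {m n p : ℕ}

theorem zero (a : A) : OIter σ 0 a = some a := rfl

theorem succ (n : ℕ) (a : A) : OIter σ (n + 1) a = (OIter σ n a).bind σ :=
  Function.iterate_succ_apply' _ n _

theorem add_of_eq_some (h : OIter σ m a = some b) (n : ℕ) :
    OIter σ (m + n) a = OIter σ n b := by
  rw [OIter, Nat.add_comm, Function.iterate_add_apply, ← OIter, h, OIter]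

theorem succ_of_eq_some (h : σ a = some b) (n : ℕ) : OIter σ (n + 1) a = OIter σ n b := by
  rw [Nat.add_comm, add_of_eq_some (by rwa [OIter, Function.iterate_one]) n]

theorem eq_none_of_le (h : OIter σ m a = none) (hmn : m ≤ n) : OIter σ n a = none := by
  induction n, hmn using Nat.le_induction with
  | base => exact h
  | succ n _ ih => rw [succ, ih, Option.bind_none]

theorem mul_of_eq_self (h : OIter σ p a = some a) (k : ℕ) : OIter σ (k * p) a = some a := by
  induction k with
  | zero => rw [Nat.zero_mul, zero]
  | succ k ih => rw [Nat.succ_mul, add_of_eq_some ih, h]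

theorem ne_none_of_eq_self (hp : 0 < p) (h : OIter σ p a = some a) (n : ℕ) :
    OIter σ n a ≠ none := fun hn => by
  have := eq_none_of_le hn (Nat.le_mul_of_pos_right n hp)
  rw [mul_of_eq_self h] at this
  exact Option.some_ne_none a this

theorem eq_some_of_inverse (hinv : ∀ x y, σ x = some y → τ y = some x) {k : ℕ} {x y : A}
    (h : OIter σ k x = some y) : OIter τ k y = some x := by
  induction k generalizing y with
  | zero => rw [zero, Option.some.injEq] at h; rw [h, zero]
  | succ k ih =>
    obtain ⟨z, hz, hzy⟩ := Option.bind_eq_some_iff.mp ((succ k x).symm.trans h)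
    rw [succ_of_eq_some (hinv z y hzy), ih hz]

theorem exists_eq_self_of_forall_ne_none [Finite A]
    (hinv : ∀ x y, σ x = some y → τ y = some x) (h : ∀ n, OIter σ n a ≠ none) :
    ∃ p, 0 < p ∧ OIter σ p a = some a := by
  obtain ⟨i, j, hij, he⟩ := Finite.exists_ne_map_eq_of_infinite fun n => OIter σ n a
  wlog hlt : i < j generalizing i j
  · exact this j i hij.symm he.symm (by omega)
  obtain ⟨z, hz⟩ := Option.ne_none_iff_exists'.mp (h i)
  obtain ⟨w, hw⟩ := Option.ne_none_iff_exists'.mp (h (j - i))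
  have hwz : OIter σ i w = some z := by
    rw [← add_of_eq_some hw, Nat.sub_add_cancel hlt.le, ← he, hz]
  -- both `a` and `w` are `τ^i z`
  have hwa : w = a := Option.some.inj <|
    (eq_some_of_inverse hinv hwz).symm.trans (eq_some_of_inverse hinv hz)
  exact ⟨j - i, Nat.sub_pos_of_lt hlt, hwa ▸ hw⟩

theorem exists_eq_none_of_inverse [Finite A] (hinv : ∀ x y, σ x = some y ↔ τ y = some x)
    (h : ∃ m, OIter σ m a = none) : ∃ n, OIter τ n a = none := by
  by_contra! hτ
  obtain ⟨p, hp, hpa⟩ := exists_eq_self_of_forall_ne_none (fun x y => (hinv y x).mpr) hτ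
  obtain ⟨m, hm⟩ := h
  exact ne_none_of_eq_self hp (eq_some_of_inverse (fun x y => (hinv y x).mpr) hpa) m hm

theorem exists_first_eq_none (h : ∃ m, OIter σ m a = none) :
    ∃ n, 0 < n ∧ OIter σ n a = none ∧ ∀ i < n, OIter σ i a ≠ none := by
  classical
  refine ⟨Nat.find h, Nat.pos_of_ne_zero fun h0 => ?_, Nat.find_spec h, fun i => Nat.find_min h⟩
  have := Nat.find_spec h
  rw [h0, zero] at this
  exact Option.some_ne_none a this

theorem of_isChain {l : List A} (hc : l.IsChain fun x y => σ x = some y) {i k : ℕ}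
    (h : i + k < l.length) : OIter σ k l[i] = some l[i + k] := by
  induction k with
  | zero => rfl
  | succ k ih =>
    rw [succ, ih (by omega), Option.bind_some]
    exact List.isChain_iff_getElem.mp hc (i + k) h

theorem exists_list_getElem?_eq (h : ∀ i < n, OIter σ i a ≠ none) :
    ∃ l : List A, l.length = n ∧ ∀ i < n, l[i]? = OIter σ i a := by
  refine ⟨(List.range n).map fun i => (OIter σ i a).getD a, by simp, fun i hi => ?_⟩
  simp [List.getElem?_range hi, Option.getD_of_ne_none (h i hi)]

end OIter

section

variable {A : Type} {σ τ : A → Option A} {a : A}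

theorem IsMaximalPath.exists_oIter_eq_none {l : List A} (hl : IsMaximalPath σ τ l) (ha : a ∈ l) :
    ∃ m, OIter σ m a = none := by
  obtain ⟨-, hc, hlast, -⟩ := hl
  obtain ⟨i, hi, rfl⟩ := List.getElem_of_mem ha
  have hk : i + (l.length - 1 - i) < l.length := by omega
  refine ⟨l.length - 1 - i + 1, ?_⟩
  rw [OIter.succ, OIter.of_isChain hc hk, Option.bind_some]
  apply hlast
  simp [List.getLast?_eq_getElem?, show i + (l.length - 1 - i) = l.length - 1 by omega]

theorem IsSigmaCycleOf.oIter_ne_none {l : List A} (hl : IsSigmaCycleOf σ a l) (n : ℕ) :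
    OIter σ n a ≠ none :=
  OIter.ne_none_of_eq_self (List.length_pos_iff.mpr hl.1) hl.2.2.1 n

theorem isMaximalPath_of_getElem?_eq_oIter {l : List A} {b : A}
    (hl : ∀ i < l.length, l[i]? = OIter σ i b) (hne : l ≠ [])
    (hend : OIter σ l.length b = none) (hb : τ b = none) : IsMaximalPath σ τ l := by
  have hpos := List.length_pos_iff.mpr hne
  refine ⟨hne, List.isChain_iff_getElem.mpr fun i hi => ?_, fun x hx => ?_, fun x hx => ?_⟩
  · have := hl (i + 1) hi
    rw [OIter.succ, ← hl i (by omega), List.getElem?_eq_getElem hi,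
      List.getElem?_eq_getElem (by omega), Option.bind_some] at this
    exact this.symm
  · rw [List.getLast?_eq_getElem?, hl _ (by omega)] at hx
    rwa [← Nat.sub_add_cancel hpos, OIter.succ, Option.mem_def.mp hx, Option.bind_some] at hend
  · rw [List.head?_eq_getElem?, hl 0 hpos, OIter.zero, Option.mem_def, Option.some.injEq] at hx
    rwa [← hx]

theorem exists_isMaximalPath_mem [Finite A] (hinv : ∀ x y, σ x = some y ↔ τ y = some x)
    (h : ∃ m, OIter σ m a = none) : ∃ l, IsMaximalPath σ τ l ∧ a ∈ l := by
  obtain ⟨n, hn, hτn, hτmin⟩ := OIter.exists_first_eq_none (OIter.exists_eq_none_of_inverse hinv h)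
  -- the path starts at `b = τ^{n-1}(a)`
  obtain ⟨b, hb⟩ := Option.ne_none_iff_exists'.mp (hτmin (n - 1) (by omega))
  have hτb : τ b = none := by
    rwa [← Nat.sub_add_cancel hn, OIter.succ, hb, Option.bind_some] at hτn
  have hba : OIter σ (n - 1) b = some a := OIter.eq_some_of_inverse (fun x y => (hinv y x).mpr) hb
  obtain ⟨N, hN, hσN, hσmin⟩ : ∃ N, 0 < N ∧ OIter σ N b = none ∧ ∀ i < N, OIter σ i b ≠ none :=
    let ⟨m, hm⟩ := h
    OIter.exists_first_eq_none ⟨n - 1 + m, by rwa [OIter.add_of_eq_some hba]⟩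
  have hnN : n - 1 < N := Nat.lt_of_not_le fun hle => by
    rw [OIter.eq_none_of_le hσN hle] at hba
    exact Option.some_ne_none a hba.symm
  obtain ⟨l, rfl, hl⟩ := OIter.exists_list_getElem?_eq hσmin
  refine ⟨l, isMaximalPath_of_getElem?_eq_oIter hl (List.ne_nil_of_length_pos hN) hσN hτb, ?_⟩
  exact List.mem_of_getElem? ((hl _ hnN).trans hba)

theorem exists_isSigmaCycleOf [Finite A] (hinv : ∀ x y, σ x = some y → τ y = some x)
    (h : ∀ n, OIter σ n a ≠ none) : ∃ l, IsSigmaCycleOf σ a l := by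
  classical
  have hp := OIter.exists_eq_self_of_forall_ne_none hinv h
  obtain ⟨hpos, hper⟩ := Nat.find_spec hp
  obtain ⟨l, hlen, hl⟩ := OIter.exists_list_getElem?_eq (n := Nat.find hp) fun i _ => h i
  refine ⟨l, List.ne_nil_of_length_pos (hlen ▸ hpos), hlen ▸ hl, hlen ▸ hper, ?_⟩
  exact fun k hk hkl hka => Nat.find_min hp (hlen ▸ hkl) ⟨hk, hka⟩

end

theorem mem_maximal_path_xor_cycle_general
    (K V A : Type) [Field K] [Fintype V] [DecidableEq V] [Fintype A]
    (s t : A → V) (I : TwoSidedIdeal (PathAlg K V A s t))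
    (σ τ : A → Option A) (hσ : SigmaSpec K V A s t I σ) (hτ : TauSpec K V A s t I τ)
    (a : A) :
    Xor' (∃ l : List A, IsMaximalPath σ τ l ∧ a ∈ l)
         (∃ l : List A, IsSigmaCycleOf σ a l) := by
  have hinv : ∀ x y, σ x = some y ↔ τ y = some x := fun x y => (hσ x y).trans (hτ y x).symm
  by_cases hdies : ∃ m, OIter σ m a = none
  · obtain ⟨m, hm⟩ := hdies
    exact Or.inl ⟨exists_isMaximalPath_mem hinv ⟨m, hm⟩, fun ⟨_, hl⟩ => hl.oIter_ne_none m hm⟩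
  · rw [not_exists] at hdies
    refine Or.inr ⟨exists_isSigmaCycleOf (fun x y => (hinv x y).mp) hdies, ?_⟩
    rintro ⟨l, hl, ha⟩
    obtain ⟨m, hm⟩ := hl.exists_oIter_eq_none ha
    exact hdies m hm

/-- Every arrow `a` occurs either in the `(σ,τ)`-maximal path
`M_a` or in the simple cycle `C_a`, but not both. -/
theorem mem_maximal_path_xor_cycle
    (K V A : Type) [Field K] [Fintype V] [DecidableEq V] [Fintype A]
    (s t : A → V) (I : TwoSidedIdeal (PathAlg K V A s t))
    (hAdm : Admissible K V A s t I) (hM : ConditionM K V A s t I)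
    (σ τ : A → Option A) (hσ : SigmaSpec K V A s t I σ) (hτ : TauSpec K V A s t I τ)
    (a : A) :
    Xor' (∃ l : List A, IsMaximalPath σ τ l ∧ a ∈ l)
         (∃ l : List A, IsSigmaCycleOf σ a l) :=
  mem_maximal_path_xor_cycle_general K V A s t I σ τ hσ hτ a
end

section
/- Let (𝒮, μ) be a defining pair in a quiver Q and I the ideal generated by the relations of Types 1, 2, 3. Then I is admissible: with N = max{μ(C)·ℓ(C) : C ∈ 𝒮}, every path of length N + 1 lies in I, and I is contained in the ideal generated by paths of length 2. -/
/-!  A model of the path algebra `KQ` of a finite quiver `Q` (vertex set `V`,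
arrow set `A`, source and target maps `s t : A → V`), as the quotient of the
free algebra on `V ⊕ A` by the usual path-algebra relations.  -/

open FreeAlgebra

section AdmissibleAux

variable {K V A : Type} [Field K] [Fintype V] [DecidableEq V] {s t : A → V}

lemma pathElem_append (l₁ l₂ : List A) :
    pathElem K V A s t (l₁ ++ l₂) = pathElem K V A s t l₁ * pathElem K V A s t l₂ := by
  simp [pathElem]

lemma pathElem_cons (a : A) (l : List A) :
    pathElem K V A s t (a :: l) = arrow K V A s t a * pathElem K V A s t l := by
  simp [pathElem]

lemma cyclePow_succ (l : List A) (m : ℕ) : cyclePow l (m + 1) = l ++ cyclePow l m := by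
  simp [cyclePow, List.replicate_succ]

lemma cyclePow_length (l : List A) (m : ℕ) : (cyclePow l m).length = m * l.length := by
  induction m with
  | zero => simp [cyclePow]
  | succ m ih => rw [cyclePow_succ]; simp [ih, Nat.succ_mul]; ring

lemma mem_cyclePow {l : List A} {x : A} {m : ℕ} (h : x ∈ cyclePow l m) : x ∈ l := by
  simp only [cyclePow, List.mem_flatten] at h
  obtain ⟨l', hl', hx⟩ := h
  rwa [List.eq_of_mem_replicate hl'] at hx

lemma cyclePow_getElem? {l : List A} {m k : ℕ} (h : k < m * l.length) :
    (cyclePow l m)[k]? = l[k % l.length]? := by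
  induction m generalizing k with
  | zero => omega
  | succ m ih =>
    rw [cyclePow_succ]
    rcases lt_or_ge k l.length with hk | hk
    · rw [List.getElem?_append_left hk, Nat.mod_eq_of_lt hk]
    · obtain ⟨j, rfl⟩ := Nat.exists_eq_add_of_le hk
      rw [List.getElem?_append_right hk]
      have : l.length + j - l.length = j := by omega
      rw [this, ih (by rw [Nat.succ_mul] at h; omega), Nat.add_mod_left]

lemma cyclePow_append_comm (l₁ l₂ : List A) (m : ℕ) :
    cyclePow (l₁ ++ l₂) m ++ l₁ = l₁ ++ cyclePow (l₂ ++ l₁) m := by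
  induction m with
  | zero => simp [cyclePow]
  | succ m ih =>
    rw [cyclePow_succ, cyclePow_succ, List.append_assoc, ih]
    simp [List.append_assoc]

lemma infix_cyclePow_rot {l l' c : List A} (hrot : l.IsRotated l') {m : ℕ}
    (h : c <:+: cyclePow l m) : c <:+: cyclePow l' (m + 1) := by
  obtain ⟨n, rfl⟩ := hrot
  rcases eq_or_ne l [] with rfl | hne
  · simpa [cyclePow, List.rotate_nil] using h
  · rw [List.rotate_eq_drop_append_take_mod]
    refine h.trans ⟨l.drop (n % l.length), l.take (n % l.length), ?_⟩
    have := cyclePow_append_comm (l.take (n % l.length)) (l.drop (n % l.length)) m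
    rw [List.take_append_drop] at this
    calc l.drop (n % l.length) ++ cyclePow l m ++ l.take (n % l.length)
        = l.drop (n % l.length) ++ (cyclePow l m ++ l.take (n % l.length)) := by
          rw [List.append_assoc]
      _ = l.drop (n % l.length) ++ (l.take (n % l.length) ++
            cyclePow (l.drop (n % l.length) ++ l.take (n % l.length)) m) := by
          rw [this]
      _ = cyclePow (l.drop (n % l.length) ++ l.take (n % l.length)) (m + 1) := by
          rw [cyclePow_succ, List.append_assoc]

lemma succ_unique {l : List A} (hnd : l.Nodup) {x y : A} {m : ℕ}
    (h : [x, y] <:+: cyclePow l m) (j : ℕ) (hx : l[j % l.length]? = some x) :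
    l[(j + 1) % l.length]? = some y := by
  obtain ⟨u, v, huv⟩ := h
  have hlen : (cyclePow l m).length = m * l.length := cyclePow_length l m
  have hul : u.length + 1 < m * l.length := by
    have := congrArg List.length huv
    simp only [List.length_append, List.length_cons, List.length_nil, hlen] at this
    omega
  have hx2 : (cyclePow l m)[u.length]? = some x := by
    rw [← huv, List.append_assoc, List.getElem?_append_right (le_refl u.length)]
    simp
  have hy2 : (cyclePow l m)[u.length + 1]? = some y := by
    rw [← huv, List.append_assoc,
      List.getElem?_append_right (by omega : u.length ≤ u.length + 1)]
    have : u.length + 1 - u.length = 1 := by omega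
    rw [this]; simp
  rw [cyclePow_getElem? (by omega)] at hx2
  rw [cyclePow_getElem? hul] at hy2
  have hl0 : 0 < l.length := by
    rcases Nat.eq_zero_or_pos l.length with h0 | h0
    · rw [h0, Nat.mul_zero] at hul; omega
    · exact h0
  have e1 : u.length % l.length = j % l.length := by
    obtain ⟨h1, e1⟩ := List.getElem?_eq_some_iff.mp hx2
    obtain ⟨h2, e2⟩ := List.getElem?_eq_some_iff.mp hx
    exact (hnd.getElem_inj_iff).mp (e1.trans e2.symm)
  rw [Nat.add_mod, ← e1, ← Nat.add_mod]
  exact hy2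

lemma follow_cycle {S : Set (List A)} {μ : List A → ℕ} (hS : IsDefiningPair s t S μ)
    (p l₀ : List A) (hl₀ : l₀ ∈ S) (h0 : p[0]? = l₀[0]?)
    (H : ∀ i, i + 1 < p.length → ∃ x y, p[i]? = some x ∧ p[i + 1]? = some y ∧
        ∃ l ∈ S, ∃ m, [x, y] <:+: cyclePow l m) :
    ∀ i, i < p.length → p[i]? = l₀[i % l₀.length]? := by
  have hne : l₀ ≠ [] := (hS.1 l₀ hl₀).1
  have hlen : 0 < l₀.length := List.length_pos_iff.mpr hne
  intro i
  induction i with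
  | zero => intro _; rw [Nat.zero_mod]; exact h0
  | succ i ih =>
    intro hi1
    have hpi := ih (by omega)
    have hmod : i % l₀.length < l₀.length := Nat.mod_lt _ hlen
    obtain ⟨x, y, hx, hy, l, hl, m, hinf⟩ := H i hi1
    have hx' : l₀[i % l₀.length]? = some x := by rw [← hpi]; exact hx
    have hxl₀ : x ∈ l₀ := List.mem_of_getElem? hx'
    have hxl : x ∈ l := mem_cyclePow (hinf.subset (by simp))
    have hrot : l.IsRotated l₀ :=
      hS.2.2.2.2.2.2 l hl l₀ hl₀ ⟨x, hxl, hxl₀⟩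
    have hinf' : [x, y] <:+: cyclePow l₀ (m + 1) := infix_cyclePow_rot hrot hinf
    have := succ_unique (hS.1 l₀ hl₀).2.2.2 hinf' i hx'
    rw [hy, this]

lemma pathElem_mem_jsq {l : List A} (h : 2 ≤ l.length) :
    pathElem K V A s t l ∈ JSqIdeal K V A s t := by
  match l, h with
  | a :: b :: r, _ =>
    have : pathElem K V A s t (a :: b :: r) =
        (arrow K V A s t a * arrow K V A s t b) * pathElem K V A s t r := by
      rw [pathElem_cons, pathElem_cons, mul_assoc]
    rw [this]
    exact (JSqIdeal K V A s t).mul_mem_right _ _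
      (TwoSidedIdeal.subset_span ⟨a, b, rfl⟩)

lemma two_le_cyclePow_length {S : Set (List A)} {μ : List A → ℕ}
    (hS : IsDefiningPair s t S μ) {l : List A} (hl : l ∈ S) : 2 ≤ μ l * l.length := by
  have h1 : 0 < μ l := hS.2.1 l hl
  have h2 : 0 < l.length := List.length_pos_iff.mpr (hS.1 l hl).1
  rcases Nat.lt_or_ge l.length 2 with h | h
  · have hl1 : l.length = 1 := by omega
    have := hS.2.2.1 l hl hl1
    calc 2 ≤ μ l := this
      _ = μ l * l.length := by rw [hl1, Nat.mul_one]
  · calc 2 = 1 * 2 := by norm_num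
      _ ≤ μ l * l.length := Nat.mul_le_mul h1 h

end AdmissibleAux

/-- For a defining pair `(𝒮, μ)` the ideal `I` generated by
the Type 1, 2, 3 relations is admissible: with `N = max{μ(C)·ℓ(C) : C ∈ 𝒮}`,
every path of length `N + 1` lies in `I`, and `I` is contained in the ideal
generated by the paths of length 2. -/
theorem defIdeal_admissible
    (K V A : Type) [Field K] [Fintype V] [DecidableEq V] [Fintype A] (s t : A → V)
    (S : Set (List A)) (μ : List A → ℕ) (hS : IsDefiningPair s t S μ)
    (N : ℕ) (hNmem : ∃ l ∈ S, μ l * l.length = N) (hNmax : ∀ l ∈ S, μ l * l.length ≤ N) :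
    (∀ l : List A, l.length = N + 1 → pathElem K V A s t l ∈ DefIdeal K V A s t S μ) ∧
      DefIdeal K V A s t S μ ≤ JSqIdeal K V A s t := by
  have hN1 : 1 ≤ N := by
    obtain ⟨l, hl, hEq⟩ := hNmem
    have := two_le_cyclePow_length hS hl
    omega
  constructor
  · -- every path of length N + 1 lies in the ideal
    intro p hp
    by_cases H : ∀ i, i + 1 < p.length → ∃ x y, p[i]? = some x ∧ p[i + 1]? = some y ∧
        ∃ l ∈ S, ∃ m, [x, y] <:+: cyclePow l m
    · -- cycle-following case: the path starts with a Type 2 relation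
      obtain ⟨x, y, hx, hy, l, hl, m, hinf⟩ := H 0 (by omega)
      have hxl : x ∈ l := mem_cyclePow (hinf.subset (by simp))
      obtain ⟨u, v, hluv⟩ := List.append_of_mem hxl
      set l₀ : List A := x :: (v ++ u) with hl₀def
      have hrot : l.IsRotated l₀ := by
        rw [hluv]
        have : (x :: v) ++ u = l₀ := by simp [hl₀def]
        rw [← this]
        exact List.isRotated_append
      have hl₀S : l₀ ∈ S := hS.2.2.2.1 l hl l₀ hrot
      have h0 : p[0]? = l₀[0]? := by rw [hx]; simp [hl₀def]
      have hfollow := follow_cycle hS p l₀ hl₀S h0 H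
      set k := μ l₀ * l₀.length with hk
      have hkN : k ≤ N := hNmax l₀ hl₀S
      have hk2 : 2 ≤ k := two_le_cyclePow_length hS hl₀S
      have hlen₀ : 0 < l₀.length := by simp [hl₀def]
      set P : List A := cyclePow l₀ (μ l₀) ++ [x] with hP
      have hPlen : P.length = k + 1 := by
        simp [hP, cyclePow_length, hk]
      have htake : p.take (k + 1) = P := by
        apply List.ext_getElem?
        intro n
        rcases Nat.lt_or_ge n (k + 1) with hn | hn
        · have hnp : n < p.length := by omega
          rw [List.getElem?_take_of_lt hn, hfollow n hnp]
          rcases Nat.lt_or_ge n k with hnk | hnk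
          · rw [hP, List.getElem?_append_left (by rw [cyclePow_length]; exact hnk),
              cyclePow_getElem? (by rw [← hk]; exact hnk)]
          · have hnk' : n = k := by omega
            subst hnk'
            rw [hP, List.getElem?_append_right (by rw [cyclePow_length, ← hk])]
            rw [cyclePow_length, ← hk, Nat.sub_self]
            have hmod0 : k % l₀.length = 0 := by rw [hk, Nat.mul_mod_left]
            rw [hmod0]
            simp [hl₀def]
        · rw [List.getElem?_eq_none, List.getElem?_eq_none]
          · omega
          · rw [List.length_take]; omega
      have hdecomp : p = P ++ p.drop (k + 1) := by
        rw [← htake, List.take_append_drop]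
      have hPgen : pathElem K V A s t P ∈ RelSet K V A s t S μ := by
        left; right
        exact ⟨l₀, hl₀S, x, by simp [hl₀def], rfl⟩
      rw [hdecomp, pathElem_append]
      exact (DefIdeal K V A s t S μ).mul_mem_right _ _
        (TwoSidedIdeal.subset_span hPgen)
    · -- Type 3 case: some consecutive pair lies on no cycle
      push_neg at H
      obtain ⟨i, hi, H3⟩ := H
      have hilt : i < p.length := by omega
      set a : A := p[i]'hilt with ha
      set b : A := p[i + 1]'hi with hb
      have hgen : arrow K V A s t a * arrow K V A s t b ∈ RelSet K V A s t S μ := by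
        right
        exact ⟨a, b, rfl, H3 a b (by simp [ha]) (by simp [hb])⟩
      have hdecomp : p = p.take i ++ (a :: b :: p.drop (i + 2)) := by
        conv_lhs => rw [← List.take_append_drop i p]
        congr 1
        rw [List.drop_eq_getElem_cons hilt, ← ha]
        congr 1
        rw [List.drop_eq_getElem_cons hi, ← hb]
      rw [hdecomp, pathElem_append, pathElem_cons, pathElem_cons]
      refine (DefIdeal K V A s t S μ).mul_mem_left _ _ ?_
      rw [← mul_assoc]
      exact (DefIdeal K V A s t S μ).mul_mem_right _ _
        (TwoSidedIdeal.subset_span hgen)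
  · -- the ideal is contained in J²
    intro x hx
    refine TwoSidedIdeal.mem_span_iff.mp hx (JSqIdeal K V A s t) ?_
    rintro y hy
    rcases hy with (⟨l, hl, l', hl', a, _, a', _, _, rfl⟩ | ⟨l, hl, a, _, rfl⟩) |
      ⟨a, b, rfl, _⟩
    · refine TwoSidedIdeal.sub_mem _ ?_ ?_ <;>
        exact pathElem_mem_jsq (by
          rw [cyclePow_length]
          first
            | exact two_le_cyclePow_length hS hl
            | exact two_le_cyclePow_length hS hl')
    · apply pathElem_mem_jsq
      rw [List.length_append, cyclePow_length]
      have := two_le_cyclePow_length hS hl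
      omega
    · exact TwoSidedIdeal.subset_span ⟨a, b, rfl⟩
end

section
/- Let A = KQ/I be a special multiserial algebra, Q* the quiver obtained from Q by adding for each (σ,τ)-maximal path M an arrow a_M from t(M) to s(M), and let 𝒮 = 𝒞 ∪ ℳ*, where 𝒞 is the set of cycles C_a (for arrows a with m̂_a existing) and ℳ* is the set of all cyclic permutations of the cycles M a_M. Let μ be constant equal to N on 𝒮, where N ≥ 2 is minimal such that all paths of length ≥ N in KQ lie in I. Then (𝒮, μ) is a defining pair in Q*. -/
/-!  A model of the path algebra `KQ` of a finite quiver `Q` (vertex set `V`,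
arrow set `A`, source and target maps `s t : A → V`), as the quotient of the
free algebra on `V ⊕ A` by the usual path-algebra relations.  -/

open FreeAlgebra

/-- The set ℳ of `(σ,τ)`-maximal paths. -/
def MaxPath {A : Type} (σ τ : A → Option A) : Type := {l : List A // IsMaximalPath σ τ l}

/-- The arrows of the quiver `Q*`: the arrows of `Q` together with one new
arrow `a_M` for each `(σ,τ)`-maximal path `M`. -/
def AStar {A : Type} (σ τ : A → Option A) : Type := A ⊕ MaxPath σ τ

/-- Source map of `Q*`: `a_M` starts at `t(M)`. -/
def sStar {V A : Type} (s t : A → V) (σ τ : A → Option A) : AStar σ τ → V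
  | Sum.inl a => s a
  | Sum.inr M => t (M.val.getLast M.prop.1)

/-- Target map of `Q*`: `a_M` ends at `s(M)`. -/
def tStar {V A : Type} (s t : A → V) (σ τ : A → Option A) : AStar σ τ → V
  | Sum.inl a => t a
  | Sum.inr M => s (M.val.head M.prop.1)

/-- `𝒮 = 𝒞 ∪ ℳ*` in `Q*`: the cycles `C_a`, together with all cyclic
permutations of the cycles `M a_M` for `M ∈ ℳ`. -/
def SStar {A : Type} (σ τ : A → Option A) : Set (List (AStar σ τ)) :=
  {L | ∃ (c : A) (l : List A), IsSigmaCycleOf σ c l ∧ L = l.map Sum.inl} ∪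
  {L | ∃ M : MaxPath σ τ, (M.val.map Sum.inl ++ [Sum.inr M]).IsRotated L}

/-! Since `σ a = b` iff `τ b = a`, the map `σ` is a partial permutation of the arrows with
inverse `τ`, and `σ a = b` forces `t a = s b` (otherwise `ab = 0 ∈ I`).  Every arrow thus lies
on exactly one `σ`-orbit: a periodic one, read off as the cycle `C_a`, or a finite one, which is
a maximal path `M`.  Both are simple cycles of `Q*` once `M` is closed up by `a_M`; no arrow lies
on both kinds of orbit, and two cycles of `𝒮` through a common arrow come from the same orbit,
hence are rotations of each other. -/

section Iterates

variable {A : Type} (σ : A → Option A)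

@[simp]
theorem oIter_zero (a : A) : OIter σ 0 a = some a := rfl

theorem oIter_succ (n : ℕ) (a : A) : OIter σ (n + 1) a = (OIter σ n a).bind σ :=
  Function.iterate_succ_apply' _ _ _

theorem oIter_add (m n : ℕ) (a : A) :
    OIter σ (m + n) a = (OIter σ m a).bind (OIter σ n) := by
  induction n with
  | zero => cases OIter σ m a <;> rfl
  | succ n ih => rw [← add_assoc, oIter_succ, ih]; cases OIter σ m a <;> simp [oIter_succ]

theorem oIter_succ' (n : ℕ) (a : A) : OIter σ (n + 1) a = (σ a).bind (OIter σ n) := by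
  rw [add_comm, oIter_add]; rfl

variable {σ}

theorem oIter_eq_none_of_le {m n : ℕ} {a : A} (h : OIter σ m a = none) (hmn : m ≤ n) :
    OIter σ n a = none := by
  rw [← Nat.add_sub_cancel' hmn, oIter_add, h]; rfl

theorem oIter_eq_none_of_eq_none {k : ℕ} {a : A} (ha : σ a = none) (hk : 0 < k) :
    OIter σ k a = none := by
  obtain ⟨k, rfl⟩ := Nat.exists_eq_add_of_lt hk
  rw [zero_add, oIter_succ', ha]; rfl

theorem oIter_isSome_of_periodic {p : ℕ} {a : A} (hp : 0 < p) (h : OIter σ p a = some a)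
    (k : ℕ) : (OIter σ k a).isSome := by
  have hmul : ∀ j, OIter σ (j * p) a = some a := by
    intro j
    induction j with
    | zero => simp
    | succ j ih => rw [Nat.succ_mul, oIter_add, ih]; exact h
  cases hk : OIter σ k a with
  | some _ => rfl
  | none => simpa [hmul] using oIter_eq_none_of_le hk (Nat.le_mul_of_pos_right k hp)

theorem getElem?_eq_oIter_of_isChain {l : List A} (h : l.IsChain (σ · = some ·)) {a : A}
    (ha : l.head? = some a) {i : ℕ} (hi : i < l.length) : l[i]? = OIter σ i a := by
  induction l generalizing a i with
  | nil => simp at hi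
  | cons x l ih =>
    obtain rfl : x = a := Option.some.inj ha
    cases i with
    | zero => rfl
    | succ i =>
      obtain ⟨b, l, rfl⟩ := List.exists_cons_of_length_pos (by simp at hi; omega : 0 < l.length)
      rw [List.isChain_cons_cons] at h
      rw [oIter_succ', h.1]
      exact ih h.2 rfl (by simpa using hi)

end Iterates

section PartialPermutation

variable {A : Type} (f : A ≃. A)

theorem oIter_injective {n : ℕ} {a a' x : A} (h : OIter f n a = some x)
    (h' : OIter f n a' = some x) : a = a' := by
  induction n generalizing x with
  | zero => exact (Option.some.inj h).trans (Option.some.inj h').symm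
  | succ n ih =>
    rw [oIter_succ, Option.bind_eq_some_iff] at h h'
    obtain ⟨y, hy, hyx⟩ := h
    obtain ⟨y', hy', hyx'⟩ := h'
    obtain rfl := f.inj hyx hyx'
    exact ih hy hy'

theorem oIter_symm_eq_some_of_oIter_eq_some {k : ℕ} {a b : A} (h : OIter f k a = some b) :
    OIter f.symm k b = some a := by
  induction k generalizing b with
  | zero => exact congrArg some (Option.some.inj h).symm
  | succ k ih =>
    rw [oIter_succ, Option.bind_eq_some_iff] at h
    obtain ⟨y, hy, hyb⟩ := h
    rw [oIter_succ', f.eq_some_iff.mpr hyb]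
    exact ih hy

theorem oIter_symm_eq_some_iff {k : ℕ} {a b : A} :
    OIter f.symm k a = some b ↔ OIter f k b = some a :=
  ⟨fun h => by simpa using oIter_symm_eq_some_of_oIter_eq_some f.symm h,
    oIter_symm_eq_some_of_oIter_eq_some f⟩

theorem oIter_ne_self_of_symm_eq_none {k : ℕ} {a : A} (ha : f.symm a = none) (hk : 0 < k) :
    OIter f k a ≠ some a := by
  rw [Ne, ← oIter_symm_eq_some_iff, oIter_eq_none_of_eq_none ha hk]
  simp

theorem nodup_of_getElem?_eq_oIter {l : List A} {a : A}
    (hl : ∀ i < l.length, l[i]? = OIter f i a)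
    (hret : ∀ k, 0 < k → k < l.length → OIter f k a ≠ some a) : l.Nodup := by
  rw [List.nodup_iff_getElem?_ne_getElem?]
  intro i j hij hj heq
  obtain ⟨b, hb⟩ : ∃ b, OIter f i a = some b :=
    ⟨l[i], by rw [← hl i (by omega), List.getElem?_eq_getElem]⟩
  obtain ⟨c, hc⟩ := Option.ne_none_iff_exists'.mp fun (h : OIter f (j - i) a = none) => by
    have := oIter_eq_none_of_le h (show j - i ≤ j by omega)
    rw [← hl j hj, List.getElem?_eq_none_iff] at this
    omega
  have hcb : OIter f i c = some b :=
    calc OIter f i c = (OIter f (j - i) a).bind (OIter f i) := by rw [hc]; rfl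
      _ = l[i]? := by rw [← oIter_add, Nat.sub_add_cancel hij.le, heq, hl j hj]
      _ = some b := by rw [hl i (by omega), hb]
  obtain rfl := oIter_injective f hcb hb
  exact hret (j - i) (by omega) (by omega) hc

end PartialPermutation

section SimpleCycles

variable {V B : Type} {s t : B → V} {l l' : List B}

theorem isSimpleCycle_iff :
    IsSimpleCycle s t l ↔ l ≠ [] ∧ Cycle.Chain (fun a b => t a = s b) l ∧ l.Nodup := by
  rcases eq_or_ne l [] with rfl | hl
  · simp [IsSimpleCycle]
  rw [IsSimpleCycle, Composable, Cycle.chain_ne_nil _ hl, List.isChain_cons,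
    List.getLast?_eq_some_getLast hl]
  simp only [Option.mem_some_iff, forall_eq']
  tauto

theorem IsSimpleCycle.of_isRotated (h : IsSimpleCycle s t l) (hr : l ~r l') :
    IsSimpleCycle s t l' := by
  rw [isSimpleCycle_iff, ← List.length_pos_iff, ← hr.perm.length_eq, List.length_pos_iff,
    ← Cycle.coe_eq_coe.mpr hr, ← hr.nodup_iff]
  exact isSimpleCycle_iff.mp h

theorem IsSimpleCycle.map {C : Type} {s' t' : C → V} {g : B → C} (hg : Function.Injective g)
    (hs : ∀ b, s' (g b) = s b) (ht : ∀ b, t' (g b) = t b) (h : IsSimpleCycle s t l) :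
    IsSimpleCycle s' t' (l.map g) := by
  obtain ⟨hne, hc, hnd⟩ := isSimpleCycle_iff.mp h
  refine isSimpleCycle_iff.mpr ⟨by simpa using hne, ?_, hnd.map hg⟩
  rw [← Cycle.map_coe, Cycle.chain_map]
  simpa only [hs, ht] using hc

end SimpleCycles

section SigmaCycles

variable {A : Type} {a b : A} {l l' : List A}

theorem IsSigmaCycleOf.eq {σ : A → Option A} (h : IsSigmaCycleOf σ a l)
    (h' : IsSigmaCycleOf σ a l') : l = l' := by
  have hlen : l.length = l'.length := by
    by_contra hne
    rcases Nat.lt_or_gt_of_ne hne with hlt | hgt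
    · exact h'.2.2.2 _ (List.length_pos_iff.mpr h.1) hlt h.2.2.1
    · exact h.2.2.2 _ (List.length_pos_iff.mpr h'.1) hgt h'.2.2.1
  refine List.ext_getElem? fun i => ?_
  by_cases hi : i < l.length
  · rw [h.2.1 i hi, h'.2.1 i (hlen ▸ hi)]
  · rw [List.getElem?_eq_none (by omega), List.getElem?_eq_none (by omega)]

theorem exists_isSigmaCycleOf_s16 {σ : A → Option A} (hper : ∃ m, 0 < m ∧ OIter σ m a = some a) :
    ∃ l, IsSigmaCycleOf σ a l := by
  classical
  obtain ⟨hm0, hma⟩ := Nat.find_spec hper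
  have hsome : ∀ i < Nat.find hper, (OIter σ i a).isSome := fun i _ =>
    oIter_isSome_of_periodic hm0 hma i
  refine ⟨List.ofFn fun i : Fin (Nat.find hper) => (OIter σ i a).get (hsome i i.2),
    by simp [hm0.ne'], fun i hi => ?_, by simpa using hma, fun k hk0 hk hka => ?_⟩
  · rw [List.length_ofFn] at hi
    simp [hi]
  · exact Nat.find_min hper (by simpa using hk) ⟨hk0, hka⟩

variable (f : A ≃. A)

theorem isSigmaCycleOf_iff :
    IsSigmaCycleOf f a l ↔
      l.head? = some a ∧ Cycle.Chain (fun x y => f x = some y) l ∧ l.Nodup := by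
  constructor
  · rintro h
    obtain ⟨hne, hidx, hret, hmin⟩ := h
    have hstep : ∀ i (hi : i < l.length), OIter f (i + 1) a = f l[i] := fun i hi => by
      rw [oIter_succ, ← hidx i hi, List.getElem?_eq_getElem hi]; rfl
    have hpos := List.length_pos_iff.mpr hne
    refine ⟨by rw [List.head?_eq_getElem?, hidx 0 hpos, oIter_zero], ?_,
      nodup_of_getElem?_eq_oIter f hidx hmin⟩
    rw [Cycle.chain_ne_nil _ hne, List.isChain_cons, List.isChain_iff_getElem]
    refine ⟨fun y hy => ?_, fun i hi => ?_⟩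
    · rw [List.getLast_eq_getElem, ← hstep _ (by omega), Nat.sub_add_cancel hpos, hret]
      simpa [List.head?_eq_getElem?, hidx 0 hpos] using hy
    · rw [← hstep i (by omega), ← hidx (i + 1) hi, List.getElem?_eq_getElem]
  · rintro ⟨ha, hc, hnd⟩
    have hne : l ≠ [] := by rintro rfl; simp at ha
    rw [Cycle.chain_ne_nil _ hne, List.isChain_cons] at hc
    have hidx := fun i (hi : i < l.length) => getElem?_eq_oIter_of_isChain hc.2 ha hi
    have hpos := List.length_pos_iff.mpr hne
    refine ⟨hne, hidx, ?_, fun k hk0 hk hka => ?_⟩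
    · rw [← Nat.sub_add_cancel hpos, oIter_succ, ← hidx _ (by omega),
        List.getElem?_eq_getElem (by omega), ← List.getLast_eq_getElem hne]
      exact hc.1 a ha
    · have := List.nodup_iff_getElem?_ne_getElem?.mp hnd 0 k hk0 hk
      rw [hidx 0 hpos, hidx k hk, hka] at this
      exact this rfl

variable {f}

theorem IsSigmaCycleOf.of_isRotated (h : IsSigmaCycleOf f a l) (hr : l ~r l')
    (hb : l'.head? = some b) : IsSigmaCycleOf f b l' := by
  rw [isSigmaCycleOf_iff] at h ⊢
  exact ⟨hb, Cycle.coe_eq_coe.mpr hr ▸ h.2.1, hr.nodup_iff.mp h.2.2⟩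

theorem IsSigmaCycleOf.isRotated_of_mem {a' : A} (h : IsSigmaCycleOf f a l)
    (h' : IsSigmaCycleOf f a' l') (hb : b ∈ l) (hb' : b ∈ l') : l ~r l' := by
  obtain ⟨i, hi, rfl⟩ := List.getElem_of_mem hb
  obtain ⟨j, hj, hji⟩ := List.getElem_of_mem hb'
  have hrot : l.rotate i = l'.rotate j :=
    (h.of_isRotated ⟨i, rfl⟩ (by rw [List.head?_rotate hi, List.getElem?_eq_getElem hi])).eq
      (h'.of_isRotated ⟨j, rfl⟩
        (by rw [List.head?_rotate hj, List.getElem?_eq_getElem hj, hji]))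
  have hl' := List.IsRotated.forall l' j
  rw [← hrot] at hl'
  exact (List.IsRotated.forall l i).symm.trans hl'

end SigmaCycles

section MaximalPaths

variable {A : Type} {σ τ : A → Option A} {l l' : List A} {b : A}

theorem IsMaximalPath.getElem?_eq_oIter (hl : IsMaximalPath σ τ l) {i : ℕ} (hi : i < l.length) :
    l[i]? = OIter σ i (l.head hl.1) :=
  getElem?_eq_oIter_of_isChain hl.2.1 (List.head?_eq_some_head hl.1) hi

theorem IsMaximalPath.oIter_length_eq_none (hl : IsMaximalPath σ τ l) :
    OIter σ l.length (l.head hl.1) = none := by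
  have hpos := List.length_pos_iff.mpr hl.1
  rw [← Nat.sub_add_cancel hpos, oIter_succ, ← hl.getElem?_eq_oIter (by omega),
    List.getElem?_eq_getElem (by omega), ← List.getLast_eq_getElem hl.1]
  exact hl.2.2.1 _ (List.getLast?_eq_some_getLast hl.1)

theorem IsMaximalPath.oIter_ne_self (hl : IsMaximalPath σ τ l) (hb : b ∈ l) {p : ℕ}
    (hp : 0 < p) : OIter σ p b ≠ some b := by
  intro hper
  obtain ⟨j, hj, rfl⟩ := List.getElem_of_mem hb
  have hnone : OIter σ (l.length - j) l[j] = none :=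
    calc OIter σ (l.length - j) l[j]
        = (OIter σ j (l.head hl.1)).bind (OIter σ (l.length - j)) := by
          rw [← hl.getElem?_eq_oIter hj, List.getElem?_eq_getElem hj]; rfl
      _ = none := by rw [← oIter_add, Nat.add_sub_cancel' hj.le, hl.oIter_length_eq_none]
  simpa [hnone] using oIter_isSome_of_periodic hp hper (l.length - j)

theorem IsMaximalPath.eq_of_head_eq (hl : IsMaximalPath σ τ l) (hl' : IsMaximalPath σ τ l')
    (h : l.head hl.1 = l'.head hl'.1) : l = l' := by
  have hlen : l.length = l'.length := by
    by_contra hne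
    rcases Nat.lt_or_gt_of_ne hne with hlt | hgt
    · have := hl'.getElem?_eq_oIter hlt
      rw [← h, hl.oIter_length_eq_none] at this
      simp at this
      omega
    · have := hl.getElem?_eq_oIter hgt
      rw [h, hl'.oIter_length_eq_none] at this
      simp at this
      omega
  refine List.ext_getElem? fun i => ?_
  by_cases hi : i < l.length
  · rw [hl.getElem?_eq_oIter hi, hl'.getElem?_eq_oIter (hlen ▸ hi), h]
  · rw [List.getElem?_eq_none (by omega), List.getElem?_eq_none (by omega)]

theorem eq_of_oIter_eq_some_of_eq_none {h h' : A} {i j : ℕ} (hh : σ h = none)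
    (hh' : σ h' = none) (hi : OIter σ i b = some h) (hj : OIter σ j b = some h') : h = h' := by
  wlog hij : i ≤ j generalizing i j h h'
  · exact (this hh' hh hj hi (by omega)).symm
  rw [← Nat.add_sub_cancel' hij, oIter_add, hi, Option.bind_some] at hj
  rcases Nat.eq_zero_or_pos (j - i) with h0 | hpos
  · rw [h0] at hj
    exact Option.some.inj hj
  · simp [oIter_eq_none_of_eq_none hh hpos] at hj

variable {f : A ≃. A}

theorem IsMaximalPath.nodup (hl : IsMaximalPath f f.symm l) : l.Nodup :=
  nodup_of_getElem?_eq_oIter f (fun _ hi => hl.getElem?_eq_oIter hi) fun _ hk _ =>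
    oIter_ne_self_of_symm_eq_none f (hl.2.2.2 _ (List.head?_eq_some_head hl.1)) hk

theorem IsMaximalPath.eq_of_mem (hl : IsMaximalPath f f.symm l)
    (hl' : IsMaximalPath f f.symm l') (hb : b ∈ l) (hb' : b ∈ l') : l = l' := by
  obtain ⟨i, hi, rfl⟩ := List.getElem_of_mem hb
  obtain ⟨j, hj, hji⟩ := List.getElem_of_mem hb'
  -- both heads are where the `τ`-orbit of `b` stops
  refine hl.eq_of_head_eq hl' (eq_of_oIter_eq_some_of_eq_none (b := l[i]) (i := i) (j := j)
    (hl.2.2.2 _ (List.head?_eq_some_head hl.1)) (hl'.2.2.2 _ (List.head?_eq_some_head hl'.1))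
    ((oIter_symm_eq_some_iff f).mpr ?_) ((oIter_symm_eq_some_iff f).mpr ?_))
  · rw [← hl.getElem?_eq_oIter hi, List.getElem?_eq_getElem hi]
  · rw [← hl'.getElem?_eq_oIter hj, List.getElem?_eq_getElem hj, hji]

end MaximalPaths

section ExistenceOfMaximalPaths

variable {A : Type} {a : A}

theorem exists_oIter_eq_none [Finite A] (f : A ≃. A)
    (hper : ¬ ∃ m, 0 < m ∧ OIter f m a = some a) : ∃ r, OIter f r a = none := by
  by_contra! hsome
  obtain ⟨i, j, hne, hij⟩ := Finite.exists_ne_map_eq_of_infinite fun n => OIter f n a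
  wlog hlt : i < j generalizing i j
  · exact this j i hne.symm hij.symm (by omega)
  obtain ⟨x, hx⟩ := Option.ne_none_iff_exists'.mp (hsome i)
  obtain ⟨y, hy⟩ := Option.ne_none_iff_exists'.mp (hsome (j - i))
  have hyx : OIter f i y = some x := by
    have hj : OIter f j a = some x := hij ▸ hx
    rwa [← Nat.sub_add_cancel hlt.le, oIter_add, hy, Option.bind_some] at hj
  obtain rfl := oIter_injective f hyx hx
  exact hper ⟨j - i, by omega, hy⟩

theorem exists_isChain_of_oIter_eq_none {σ : A → Option A} {r : ℕ} (h : OIter σ r a = none) :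
    ∃ l : List A, l.head? = some a ∧ l.IsChain (σ · = some ·) ∧
      ∀ x ∈ l.getLast?, σ x = none := by
  induction r generalizing a with
  | zero => simp at h
  | succ r ih =>
    cases ha : σ a with
    | none => exact ⟨[a], rfl, List.isChain_singleton _, by simpa using ha⟩
    | some b =>
      rw [oIter_succ', ha] at h
      obtain ⟨_ | ⟨b', l⟩, hb, hc, hlast⟩ := ih h
      · simp at hb
      obtain rfl : b = b' := (Option.some.inj hb).symm
      exact ⟨a :: b :: l, rfl, hc.cons_cons ha, by simpa using hlast⟩

theorem exists_isMaximalPath_superset (f : A ≃. A) {q : ℕ} {l : List A}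
    (hq : OIter f.symm q a = none) (ha : l.head? = some a) (hc : l.IsChain (f · = some ·))
    (hlast : ∀ x ∈ l.getLast?, f x = none) : ∃ M, IsMaximalPath f f.symm M ∧ l ⊆ M := by
  induction q generalizing l a with
  | zero => simp at hq
  | succ q ih =>
    obtain _ | ⟨a', l⟩ := l
    · simp at ha
    obtain rfl : a = a' := (Option.some.inj ha).symm
    cases hp : f.symm a with
    | none =>
      exact ⟨a :: l, ⟨List.cons_ne_nil _ _, hc, hlast, by simpa using hp⟩, List.Subset.refl _⟩
    | some p =>
      rw [oIter_succ', hp] at hq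
      obtain ⟨M, hM, hsub⟩ :=
        ih hq rfl (hc.cons_cons (f.eq_some_iff.mp hp)) (by simpa using hlast)
      exact ⟨M, hM, List.Subset.trans (List.subset_cons_self _ _) hsub⟩

theorem exists_isMaximalPath_mem_s16 [Finite A] (f : A ≃. A)
    (hper : ¬ ∃ m, 0 < m ∧ OIter f m a = some a) : ∃ M, IsMaximalPath f f.symm M ∧ a ∈ M := by
  obtain ⟨r, hr⟩ := exists_oIter_eq_none f hper
  obtain ⟨q, hq⟩ := exists_oIter_eq_none f.symm (a := a) fun ⟨m, hm, h⟩ =>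
    hper ⟨m, hm, (oIter_symm_eq_some_iff f).mp h⟩
  obtain ⟨l, ha, hc, hlast⟩ := exists_isChain_of_oIter_eq_none hr
  obtain ⟨M, hM, hsub⟩ := exists_isMaximalPath_superset f hq ha hc hlast
  exact ⟨M, hM, hsub (List.mem_of_mem_head? ha)⟩

end ExistenceOfMaximalPaths

section QuiverStar

variable {V A : Type} {s t : A → V} {f : A ≃. A} {a b : A} {l : List A}

theorem IsSigmaCycleOf.isSimpleCycle (hcomp : ∀ x y, f x = some y → t x = s y)
    (h : IsSigmaCycleOf f a l) : IsSimpleCycle s t l := by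
  obtain ⟨-, hc, hnd⟩ := (isSigmaCycleOf_iff f).mp h
  exact isSimpleCycle_iff.mpr ⟨h.1, hc.imp hcomp, hnd⟩

theorem IsSigmaCycleOf.oIter_length_of_mem (h : IsSigmaCycleOf f a l) (hb : b ∈ l) :
    OIter f l.length b = some b := by
  obtain ⟨i, hi, rfl⟩ := List.getElem_of_mem hb
  have := (h.of_isRotated ⟨i, rfl⟩
    (by rw [List.head?_rotate hi, List.getElem?_eq_getElem hi])).2.2.1
  rwa [List.length_rotate] at this

/-- The cycle `M a_M` of `Q*`. -/
def MaxPath.toCycle {σ τ : A → Option A} (M : MaxPath σ τ) : List (AStar σ τ) :=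
  M.val.map Sum.inl ++ [Sum.inr M]

theorem MaxPath.isSimpleCycle_toCycle (hcomp : ∀ x y, f x = some y → t x = s y)
    (M : MaxPath f f.symm) :
    IsSimpleCycle (sStar s t f f.symm) (tStar s t f f.symm) M.toCycle := by
  obtain ⟨l, hl⟩ := M
  -- `AStar` is a plain definition; unfolding it lets `simp` see the sum type.
  unfold MaxPath.toCycle AStar
  refine isSimpleCycle_iff.mpr ⟨by simp, ?_, ?_⟩
  · rw [Cycle.coe_eq_coe.mpr (List.isRotated_concat _ _), Cycle.chain_coe_cons,
      List.isChain_cons, List.isChain_append, List.isChain_map]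
    refine ⟨?_, ⟨hl.2.1.imp hcomp, List.isChain_singleton _, ?_⟩⟩
    · simp [List.head?_map, List.head?_eq_some_head hl.1, sStar, tStar]
    · simp [List.getLast?_map, List.getLast?_eq_some_getLast hl.1, sStar, tStar]
  · simp [List.nodup_append, hl.nodup.map Sum.inl_injective]

theorem isSimpleCycle_of_mem_SStar (hcomp : ∀ x y, f x = some y → t x = s y)
    {L : List (AStar f f.symm)} (hL : L ∈ SStar f f.symm) :
    IsSimpleCycle (sStar s t f f.symm) (tStar s t f f.symm) L := by
  rcases hL with ⟨a, l, h, rfl⟩ | ⟨M, hr⟩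
  · exact (h.isSimpleCycle hcomp).map Sum.inl_injective (fun _ => rfl) (fun _ => rfl)
  · exact (M.isSimpleCycle_toCycle hcomp).of_isRotated hr

theorem mem_SStar_of_isRotated {L L' : List (AStar f f.symm)} (hL : L ∈ SStar f f.symm)
    (hr : L ~r L') : L' ∈ SStar f f.symm := by
  rcases hL with ⟨a, l, h, rfl⟩ | ⟨M, hM⟩
  · obtain ⟨n, rfl⟩ := hr
    obtain ⟨b, hb⟩ := Option.ne_none_iff_exists'.mp (by simpa using h.1 :
      (l.rotate n).head? ≠ none)
    exact Or.inl ⟨b, l.rotate n, h.of_isRotated ⟨n, rfl⟩ hb, (List.map_rotate _ _ _).symm⟩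
  · exact Or.inr ⟨M, hM.trans hr⟩

theorem exists_mem_SStar [Finite A] (x : AStar f f.symm) : ∃ L ∈ SStar f f.symm, x ∈ L := by
  rcases x with a | M
  · by_cases hper : ∃ m, 0 < m ∧ OIter f m a = some a
    · obtain ⟨l, hl⟩ := exists_isSigmaCycleOf_s16 hper
      refine ⟨l.map Sum.inl, Or.inl ⟨a, l, hl, rfl⟩, List.mem_map_of_mem ?_⟩
      exact List.mem_of_mem_head? ((isSigmaCycleOf_iff f).mp hl).1
    · obtain ⟨l, hl, hal⟩ := exists_isMaximalPath_mem_s16 f hper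
      exact ⟨MaxPath.toCycle ⟨l, hl⟩, Or.inr ⟨⟨l, hl⟩, List.IsRotated.refl _⟩,
        List.mem_append_left _ (List.mem_map_of_mem hal)⟩
  · refine ⟨M.toCycle, Or.inr ⟨M, List.IsRotated.refl _⟩, ?_⟩
    unfold MaxPath.toCycle AStar
    simp

theorem MaxPath.eq_of_mem_toCycle {M M' : MaxPath f f.symm} {x : AStar f f.symm}
    (hx : x ∈ M.toCycle) (hx' : x ∈ M'.toCycle) : M = M' := by
  unfold MaxPath.toCycle AStar at *
  simp only [List.mem_append, List.mem_map, List.mem_singleton] at hx hx'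
  rcases hx with ⟨b, hb, rfl⟩ | rfl <;> rcases hx' with ⟨b', hb', hbb'⟩ | hM'
  · obtain rfl := Sum.inl_injective hbb'
    exact Subtype.ext (M.2.eq_of_mem M'.2 hb hb')
  · cases hM'
  · cases hbb'
  · exact Sum.inr_injective hM'

theorem notMem_toCycle_of_isSigmaCycleOf {M : MaxPath f f.symm} (h : IsSigmaCycleOf f a l)
    (hb : b ∈ l) : (Sum.inl b : AStar f f.symm) ∉ M.toCycle := by
  unfold MaxPath.toCycle AStar
  simp only [List.mem_append, List.mem_map, List.mem_singleton, Sum.inl.injEq, exists_eq_right,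
    reduceCtorEq, or_false]
  exact fun hbM => M.2.oIter_ne_self hbM (List.length_pos_of_mem hb) (h.oIter_length_of_mem hb)

theorem isRotated_of_mem_SStar {L L' : List (AStar f f.symm)} (hL : L ∈ SStar f f.symm)
    (hL' : L' ∈ SStar f f.symm) {x : AStar f f.symm} (hx : x ∈ L) (hx' : x ∈ L') :
    L ~r L' := by
  rcases hL with ⟨a, l, h, rfl⟩ | ⟨M, hM⟩ <;> rcases hL' with ⟨a', l', h', rfl⟩ | ⟨M', hM'⟩
  · obtain ⟨b, hb, rfl⟩ := List.mem_map.mp hx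
    have hb' := (List.mem_map_of_injective Sum.inl_injective).mp hx'
    exact (h.isRotated_of_mem h' hb hb').map _
  · obtain ⟨b, hb, rfl⟩ := List.mem_map.mp hx
    exact absurd (hM'.mem_iff.mpr hx') (notMem_toCycle_of_isSigmaCycleOf h hb)
  · obtain ⟨b, hb, rfl⟩ := List.mem_map.mp hx'
    exact absurd (hM.mem_iff.mpr hx) (notMem_toCycle_of_isSigmaCycleOf h' hb)
  · obtain rfl := MaxPath.eq_of_mem_toCycle (hM.mem_iff.mpr hx) (hM'.mem_iff.mpr hx')
    exact hM.symm.trans hM'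

end QuiverStar

section PathAlgebra

variable (K V A : Type) [Field K] [Fintype V] [DecidableEq V] (s t : A → V)

theorem vtx_mul_vtx_of_ne {v w : V} (h : v ≠ w) : vtx K V A s t v * vtx K V A s t w = 0 := by
  rw [vtx, vtx, ← map_mul, RingQuot.mkAlgHom_rel K (PathRel.vtxMul v w), if_neg h, map_zero]

theorem arrow_mul_vtx (a : A) : arrow K V A s t a * vtx K V A s t (t a) = arrow K V A s t a := by
  rw [arrow, vtx, ← map_mul, RingQuot.mkAlgHom_rel K (PathRel.tgt a)]

theorem vtx_mul_arrow (a : A) : vtx K V A s t (s a) * arrow K V A s t a = arrow K V A s t a := by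
  rw [arrow, vtx, ← map_mul, RingQuot.mkAlgHom_rel K (PathRel.src a)]

theorem arrow_mul_arrow_of_ne {a b : A} (h : t a ≠ s b) :
    arrow K V A s t a * arrow K V A s t b = 0 := by
  rw [← arrow_mul_vtx K V A s t a, ← vtx_mul_arrow K V A s t b, mul_assoc,
    ← mul_assoc (vtx K V A s t (t a)), vtx_mul_vtx_of_ne K V A s t h, zero_mul, mul_zero]

end PathAlgebra

theorem associated_defining_pair_general
    (K V A : Type) [Field K] [Fintype V] [DecidableEq V] [Fintype A]
    (s t : A → V) (I : TwoSidedIdeal (PathAlg K V A s t))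
    (σ τ : A → Option A) (hσ : SigmaSpec K V A s t I σ) (hτ : TauSpec K V A s t I τ)
    (N : ℕ) (hN2 : 2 ≤ N) :
    IsDefiningPair (sStar s t σ τ) (tStar s t σ τ) (SStar σ τ)
      (fun _ : List (AStar σ τ) => N) := by
  obtain ⟨f, rfl, rfl⟩ : ∃ f : A ≃. A, ⇑f = σ ∧ ⇑f.symm = τ :=
    ⟨⟨σ, τ, fun a b => (hτ b a).trans (hσ a b).symm⟩, rfl, rfl⟩
  have hcomp : ∀ x y, f x = some y → t x = s y := fun x y hxy => by
    by_contra hne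
    exact (hσ x y).mp hxy (arrow_mul_arrow_of_ne K V A s t hne ▸ I.zero_mem)
  exact ⟨fun _ => isSimpleCycle_of_mem_SStar hcomp,
    fun _ _ => (by omega : 0 < N),
    fun _ _ _ => (by omega : 1 < N),
    fun _ hL _ => mem_SStar_of_isRotated hL,
    fun _ _ _ _ _ => rfl,
    exists_mem_SStar,
    fun _ hL _ hL' ⟨_, hx, hx'⟩ => isRotated_of_mem_SStar hL hL' hx hx'⟩

/-- Let `A = KQ/I` be special multiserial, `Q*` the quiver
obtained from `Q` by adding an arrow `a_M : t(M) → s(M)` for each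
`(σ,τ)`-maximal path `M`, let `𝒮 = 𝒞 ∪ ℳ*` and let `μ ≡ N` on `𝒮`, where
`N ≥ 2` is minimal such that all paths of length `≥ N` in `KQ` lie in `I`.
Then `(𝒮, μ)` is a defining pair in `Q*`. -/
theorem associated_defining_pair
    (K V A : Type) [Field K] [Fintype V] [DecidableEq V] [Fintype A]
    (s t : A → V) (I : TwoSidedIdeal (PathAlg K V A s t))
    (hAdm : Admissible K V A s t I) (hM : ConditionM K V A s t I)
    (σ τ : A → Option A) (hσ : SigmaSpec K V A s t I σ) (hτ : TauSpec K V A s t I τ)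
    (N : ℕ) (hN2 : 2 ≤ N)
    (hNin : ∀ l : List A, N ≤ l.length → pathElem K V A s t l ∈ I)
    (hNmin : ∀ N' : ℕ, 2 ≤ N' → (∀ l : List A, N' ≤ l.length → pathElem K V A s t l ∈ I) →
      N ≤ N') :
    IsDefiningPair (sStar s t σ τ) (tStar s t σ τ) (SStar σ τ)
      (fun _ : List (AStar σ τ) => N) :=
  associated_defining_pair_general K V A s t I σ τ hσ hτ N hN2
end
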